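/- arXiv:1607.04830 — 4 statements merged into one kernel-verified Lean document; each statement's English description precedes it below -/
import Mathlib

section
/- Let σ ∈ S_n be an n-cycle and let p be an integer with d = gcd(p, n). Then σ^p is conjugate in S_n to an element of the Young subgroup S_{n-k} × S_k (permutations preserving the partition {1,...,n-k} ∪ {n-k+1,...,n}) if and only if n/d divides k. -/
/-- The Young subgroup `S_{n-k} × S_k ≤ S_n` of permutations preserving the
partition of `{0, ..., n-1}` into the first `n - k` and the last `k` letters. -/
def YoungSubgroup (n k : ℕ) : Subgroup (Equiv.Perm (Fin n)) where
  carrier := {g | ∀ i : Fin n, ((g i : ℕ) < n - k ↔ (i : ℕ) < n - k)}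
  one_mem' := fun _ => Iff.rfl
  mul_mem' := by
    intro g h hg hh i
    simpa [Equiv.Perm.mul_apply] using (hg (h i)).trans (hh i)
  inv_mem' := by
    intro g hg i
    simpa using (hg (g⁻¹ i)).symm

/-! An `n`-cycle is conjugate to the rotation `x ↦ x + 1` of `Fin n`, so `σ ^ p` is conjugate to
the translation by `a = p • 1`, an element of additive order `n / gcd(p, n)`. A permutation is
conjugate into `S_{n-k} × S_k` iff it leaves some set of size `n - k` invariant. A set invariant
under `x ↦ x + a` is a union of cosets of `⟨a⟩`, and any union of cosets is invariant, so the
sizes of invariant sets are exactly the multiples of `n / gcd(p, n)`. -/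

theorem addOrderOf_zsmul {G : Type*} [AddGroup G] [Finite G] (x : G) (j : ℤ) :
    addOrderOf (j • x) = addOrderOf x / Int.gcd j (addOrderOf x) := by
  obtain ⟨j, rfl | rfl⟩ := Int.eq_nat_or_neg j <;>
    simp only [Int.neg_gcd, Int.gcd_natCast_natCast, neg_zsmul, addOrderOf_neg, natCast_zsmul,
      addOrderOf_nsmul, Nat.gcd_comm]

section TranslationInvariant

open QuotientAddGroup

theorem QuotientAddGroup.ncard_preimage_mk {A : Type*} [AddGroup A] (H : AddSubgroup A)
    (t : Set (A ⧸ H)) : (mk ⁻¹' t : Set A).ncard = Nat.card H * t.ncard := by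
  rw [← Nat.card_coe_set_eq, Nat.card_congr (preimageMkEquivAddSubgroupProdSet H t),
    Nat.card_prod, Nat.card_coe_set_eq]

variable {A : Type*} [AddGroup A] {s : Set A} {a : A}

theorem add_zsmul_mem_iff (hs : ∀ x, x + a ∈ s ↔ x ∈ s) (j : ℤ) (x : A) :
    x + j • a ∈ s ↔ x ∈ s := by
  induction j using Int.induction_on generalizing x with
  | zero => simp
  | succ j ih => rw [add_zsmul, one_zsmul, ← add_assoc, hs, ih]
  | pred j ih => rw [← hs, sub_zsmul, one_zsmul, add_assoc, neg_add_cancel_right, ih]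

theorem preimage_image_mk_zmultiples (hs : ∀ x, x + a ∈ s ↔ x ∈ s) :
    mk ⁻¹' (mk '' s : Set (A ⧸ AddSubgroup.zmultiples a)) = s := by
  rw [preimage_image_mk]
  exact Set.iUnion_eq_const fun ⟨_, j, rfl⟩ => Set.ext (add_zsmul_mem_iff hs j)

theorem addOrderOf_dvd_ncard [Finite A] (hs : ∀ x, x + a ∈ s ↔ x ∈ s) :
    addOrderOf a ∣ s.ncard := by
  rw [← preimage_image_mk_zmultiples hs, ncard_preimage_mk, Nat.card_zmultiples]
  exact dvd_mul_right _ _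

theorem exists_ncard_eq_of_addOrderOf_dvd [Finite A] {c : ℕ} (hdvd : addOrderOf a ∣ c)
    (hc : c ≤ Nat.card A) : ∃ s : Set A, s.ncard = c ∧ ∀ x, x + a ∈ s ↔ x ∈ s := by
  obtain ⟨t, rfl⟩ := hdvd
  have hcard := ncard_preimage_mk (AddSubgroup.zmultiples a) Set.univ
  rw [Set.preimage_univ, Set.ncard_univ, Nat.card_zmultiples] at hcard
  obtain ⟨u, -, hu⟩ := Set.exists_subset_card_eq (s := Set.univ) (n := t)
    (le_of_mul_le_mul_left (hcard ▸ hc) (addOrderOf_pos a))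
  refine ⟨mk ⁻¹' u, by rw [ncard_preimage_mk, Nat.card_zmultiples, hu], fun x => ?_⟩
  have hmk : (mk (x + a) : A ⧸ AddSubgroup.zmultiples a) = mk x :=
    QuotientAddGroup.eq.mpr (by simp)
  rw [Set.mem_preimage, Set.mem_preimage, hmk]

theorem exists_ncard_eq_add_invariant_iff [Finite A] (a : A) (c : ℕ) :
    (∃ s : Set A, s.ncard = c ∧ ∀ x, x + a ∈ s ↔ x ∈ s) ↔
      addOrderOf a ∣ c ∧ c ≤ Nat.card A := by
  refine ⟨?_, fun ⟨hdvd, hc⟩ => exists_ncard_eq_of_addOrderOf_dvd hdvd hc⟩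
  rintro ⟨s, rfl, hs⟩
  exact ⟨addOrderOf_dvd_ncard hs, s.ncard_le_card⟩

end TranslationInvariant

section Conjugation

open Equiv

theorem IsConj.zpow {G : Type*} [Group G] {a b : G} (h : IsConj a b) (j : ℤ) :
    IsConj (a ^ j) (b ^ j) := by
  obtain ⟨c, rfl⟩ := isConj_iff.mp h
  exact isConj_iff.mpr ⟨c, conj_zpow.symm⟩

theorem IsConj.exists_conj_mem_iff {G : Type*} [Group G] {a b : G} (h : IsConj a b)
    (H : Subgroup G) : (∃ g, g * a * g⁻¹ ∈ H) ↔ ∃ g, g * b * g⁻¹ ∈ H := by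
  obtain ⟨c, rfl⟩ := isConj_iff.mp h
  constructor
  · rintro ⟨g, hg⟩
    exact ⟨g * c⁻¹, by simpa [mul_assoc] using hg⟩
  · rintro ⟨g, hg⟩
    exact ⟨g * c, by simpa [mul_assoc] using hg⟩

theorem Equiv.Perm.exists_preimage_eq {α : Type*} [Finite α] {s t : Set α}
    (h : s.ncard = t.ncard) : ∃ g : Perm α, ∀ x, g x ∈ t ↔ x ∈ s := by
  classical
  obtain ⟨e⟩ : Nonempty (s ≃ t) := by
    rw [← Finite.card_eq, Nat.card_coe_set_eq, Nat.card_coe_set_eq, h]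
  refine ⟨e.extendSubtype, fun x => ⟨fun hx => ?_, e.extendSubtype_mem x⟩⟩
  by_contra hxs
  exact e.extendSubtype_not_mem x hxs hx

theorem Equiv.Perm.exists_conj_invariant_iff {α : Type*} [Finite α] (τ : Perm α) (S : Set α) :
    (∃ g : Perm α, ∀ x, (g * τ * g⁻¹) x ∈ S ↔ x ∈ S) ↔
      ∃ s : Set α, s.ncard = S.ncard ∧ ∀ x, τ x ∈ s ↔ x ∈ s := by
  constructor
  · rintro ⟨g, hg⟩
    refine ⟨g ⁻¹' S, Set.ncard_preimage_of_injective_subset_range g.injective (by simp),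
      fun x => ?_⟩
    simpa using hg (g x)
  · rintro ⟨s, hs, hτ⟩
    obtain ⟨g, hg⟩ := exists_preimage_eq hs
    refine ⟨g, fun x => ?_⟩
    rw [Perm.mul_apply, Perm.mul_apply, hg, hτ, ← hg]
    simp

theorem ncard_setOf_fin_val_lt (n m : ℕ) : {i : Fin n | (i : ℕ) < m}.ncard = min n m := by
  rw [Set.ncard_eq_toFinset_card', Set.toFinset_ofPred, Fin.card_filter_val_lt]

theorem exists_conj_mem_youngSubgroup_iff {n k : ℕ} (τ : Perm (Fin n)) :
    (∃ g : Perm (Fin n), g * τ * g⁻¹ ∈ YoungSubgroup n k) ↔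
      ∃ s : Set (Fin n), s.ncard = n - k ∧ ∀ x, τ x ∈ s ↔ x ∈ s := by
  have h := Perm.exists_conj_invariant_iff τ {i : Fin n | (i : ℕ) < n - k}
  rwa [ncard_setOf_fin_val_lt, min_eq_right (Nat.sub_le n k)] at h

theorem Equiv.Perm.IsCycle.isConj_addRight_one {m : ℕ} {σ : Perm (Fin (m + 1))}
    (hσ : σ.IsCycle) (hsupp : σ.support.card = m + 1) : IsConj σ (Equiv.addRight 1) := by
  have h2 : 2 ≤ m + 1 := hsupp ▸ hσ.two_le_card_support
  rw [show Equiv.addRight 1 = finRotate (m + 1) from (Equiv.ext finRotate_apply).symm]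
  exact hσ.isConj (isCycle_finRotate_of_le h2) (by rw [support_finRotate_of_le h2, hsupp]; simp)

end Conjugation

theorem statement4 (n k : ℕ) (hk : k ≤ n)
    (σ : Equiv.Perm (Fin n)) (hσ : σ.IsCycle) (hsupp : σ.support.card = n)
    (p : ℤ) :
    (∃ g : Equiv.Perm (Fin n), g * σ ^ p * g⁻¹ ∈ YoungSubgroup n k) ↔
      n / Int.gcd p n ∣ k := by
  obtain ⟨m, rfl⟩ : ∃ m, n = m + 1 := ⟨n - 1, by have := hσ.two_le_card_support; omega⟩
  have hconj : IsConj (σ ^ p) (Equiv.addRight (p • 1 : Fin (m + 1))) := by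
    simpa only [Equiv.zsmul_addRight] using (hσ.isConj_addRight_one hsupp).zpow p
  have hord : addOrderOf (p • 1 : Fin (m + 1)) = (m + 1) / Int.gcd p ((m + 1 : ℕ) : ℤ) := by
    -- `Fin (m + 1)` is `ZMod (m + 1)` by definition
    rw [addOrderOf_zsmul, show addOrderOf (1 : Fin (m + 1)) = m + 1 from
      ZMod.addOrderOf_one (m + 1)]
  have hdvd : (m + 1) / Int.gcd p ((m + 1 : ℕ) : ℤ) ∣ m + 1 :=
    Nat.div_dvd_of_dvd (Int.natCast_dvd_natCast.mp (Int.gcd_dvd_right _ _))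
  rw [hconj.exists_conj_mem_iff, exists_conj_mem_youngSubgroup_iff]
  simp only [Equiv.coe_addRight]
  rw [exists_ncard_eq_add_invariant_iff, hord, Nat.card_fin, and_iff_left (Nat.sub_le _ _),
    Nat.dvd_sub_iff_right hk hdvd]
end

section
/- For n ≥ 2 and m ≥ 0, projection onto the first coordinate F(ℂ_m, n) → ℂ_m, (x_1,...,x_n) ↦ x_1, is a locally trivial fibration with fibre F(ℂ_{m+1}, n-1), and this fibration admits a continuous section. -/
/-- The complex plane with `m` punctures: `ℂ \ {0, 1, ..., m-1}`. -/
abbrev PuncturedPlane (m : ℕ) : Type := {z : ℂ // ∀ i : Fin m, z ≠ ((i : ℕ) : ℂ)}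

/-- The ordered configuration space `F(ℂ_m, n)` of `n` distinct points in the
`m`-punctured plane. -/
abbrev Config (m n : ℕ) : Type :=
  {f : Fin n → PuncturedPlane m // Function.Injective f}

/-!
Around `x ∈ ℂ_m` pick a ball `B(x, ρ)` missing the punctures. For `u ∈ B(x, ρ / 2)` the damped
translation `z ↦ z + max (1 - |z - x| / ρ) 0 • (u - x)` is a homeomorphism of `ℂ` (it expands
distances at most by `2`, and a contraction argument inverts it) fixing the punctures, moving `x`
to `u`, and with inverse continuous in `u`. Precomposing with a homeomorphism that fixes the
punctures and sends `m` to `x` (it exists because `ℂ` minus finitely many points is connected) gives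
homeomorphisms `φ_u` carrying `ℂ_{m+1}` onto `ℂ_m \ {u}`, and `(u, c) ↦ (u, φ_u ∘ c)` trivializes the
projection over `B(x, ρ / 2)`. The points `‖x‖ + m + j`, `1 ≤ j < n`, give a section.
-/

open Metric Set Function Filter Topology

noncomputable section

section BumpProfile

def bumpProfile {X : Type*} [PseudoMetricSpace X] (x : X) (ρ : ℝ) (z : X) : ℝ :=
  max (1 - dist z x / ρ) 0

variable {X : Type*} [PseudoMetricSpace X] {x z z' : X} {ρ : ℝ}

lemma bumpProfile_nonneg : 0 ≤ bumpProfile x ρ z := le_max_right _ _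

lemma bumpProfile_le_one (hρ : 0 < ρ) : bumpProfile x ρ z ≤ 1 :=
  max_le (sub_le_self _ (by positivity)) zero_le_one

lemma bumpProfile_self : bumpProfile x ρ x = 1 := by
  simp [bumpProfile]

lemma bumpProfile_of_le_dist (hρ : 0 < ρ) (h : ρ ≤ dist z x) : bumpProfile x ρ z = 0 :=
  max_eq_right (sub_nonpos.2 ((one_le_div hρ).2 h))

lemma abs_bumpProfile_sub_le (hρ : 0 < ρ) :
    |bumpProfile x ρ z - bumpProfile x ρ z'| ≤ dist z z' / ρ := by
  calc |bumpProfile x ρ z - bumpProfile x ρ z'|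
      ≤ |(1 - dist z x / ρ) - (1 - dist z' x / ρ)| := abs_max_sub_max_le_abs _ _ _
    _ = |dist z' x - dist z x| / ρ := by
        rw [sub_sub_sub_cancel_left, ← sub_div, abs_div, abs_of_pos hρ]
    _ ≤ dist z z' / ρ := by
        gcongr
        simpa [dist_comm, abs_sub_comm] using abs_dist_sub_le z z' x

end BumpProfile

section Bump

variable {E : Type*} [NormedAddCommGroup E] [NormedSpace ℝ E]

def bump (x : E) (ρ : ℝ) (v z : E) : E := z + bumpProfile x ρ z • v

variable {x v z z' : E} {ρ : ℝ}

lemma bump_self : bump x ρ v x = x + v := by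
  simp [bump, bumpProfile_self]

lemma bump_of_le_dist (hρ : 0 < ρ) (h : ρ ≤ dist z x) : bump x ρ v z = z := by
  simp [bump, bumpProfile_of_le_dist hρ h]

lemma continuous_bump : Continuous fun p : E × E => bump x ρ p.1 p.2 := by
  unfold bump bumpProfile
  fun_prop

lemma norm_bumpProfile_sub_smul_le (hρ : 0 < ρ) (hv : ‖v‖ ≤ ρ / 2) :
    ‖(bumpProfile x ρ z - bumpProfile x ρ z') • v‖ ≤ dist z z' / 2 := by
  rw [norm_smul, Real.norm_eq_abs]
  calc |bumpProfile x ρ z - bumpProfile x ρ z'| * ‖v‖ ≤ dist z z' / ρ * (ρ / 2) := by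
        gcongr
        exact abs_bumpProfile_sub_le hρ
    _ = dist z z' / 2 := by field_simp

lemma dist_le_two_mul_dist_bump (hρ : 0 < ρ) (hv : ‖v‖ ≤ ρ / 2) (v' z z' : E) :
    dist z z' ≤ 2 * (dist (bump x ρ v z) (bump x ρ v' z') + dist v v') := by
  set d := bump x ρ v z - bump x ρ v' z'
  set a := (bumpProfile x ρ z - bumpProfile x ρ z') • v
  set b := bumpProfile x ρ z' • (v - v')
  have hsplit : z - z' = d - a - b := by
    simp only [d, a, b, bump, sub_smul, smul_sub]; abel
  have ha : ‖a‖ ≤ dist z z' / 2 := norm_bumpProfile_sub_smul_le hρ hv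
  have hb : ‖b‖ ≤ dist v v' := by
    rw [norm_smul, Real.norm_of_nonneg bumpProfile_nonneg, ← dist_eq_norm]
    exact mul_le_of_le_one_left dist_nonneg (bumpProfile_le_one hρ)
  have : dist z z' ≤ ‖d‖ + ‖a‖ + ‖b‖ := by
    rw [dist_eq_norm, hsplit]
    exact (norm_sub_le _ _).trans (add_le_add_left (norm_sub_le _ _) _)
  rw [dist_eq_norm (bump x ρ v z)]
  linarith

lemma bump_injective (hρ : 0 < ρ) (hv : ‖v‖ ≤ ρ / 2) : Injective (bump x ρ v) := fun z z' h =>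
  dist_le_zero.1 (by simpa [h] using dist_le_two_mul_dist_bump (x := x) hρ hv v z z')

variable [CompleteSpace E]

lemma bump_surjective (hρ : 0 < ρ) (hv : ‖v‖ ≤ ρ / 2) : Surjective (bump x ρ v) := by
  intro w
  have hT : ContractingWith (1 / 2) fun z => w - bumpProfile x ρ z • v := by
    refine ⟨by rw [← NNReal.coe_lt_one]; norm_num, LipschitzWith.of_dist_le_mul fun z z' => ?_⟩
    rw [dist_sub_left, dist_eq_norm, ← sub_smul]
    simpa [div_eq_inv_mul] using norm_bumpProfile_sub_smul_le (x := x) (z := z) (z' := z') hρ hv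
  exact ⟨_, eq_sub_iff_add_eq.1 hT.fixedPoint_isFixedPt.symm⟩

def bumpHomeomorph (x : E) (hρ : 0 < ρ) (hv : ‖v‖ ≤ ρ / 2) : E ≃ₜ E where
  toEquiv := Equiv.ofBijective (bump x ρ v) ⟨bump_injective hρ hv, bump_surjective hρ hv⟩
  continuous_toFun := continuous_bump.comp (continuous_const.prodMk continuous_id)
  continuous_invFun := by
    set e := Equiv.ofBijective (bump x ρ v) ⟨bump_injective hρ hv, bump_surjective hρ hv⟩
    refine (LipschitzWith.of_dist_le_mul (K := 2) fun w w' => ?_).continuous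
    have := dist_le_two_mul_dist_bump (x := x) hρ hv v (e.symm w) (e.symm w')
    simp only [show ∀ w, bump x ρ v (e.symm w) = w from e.apply_symm_apply, dist_self,
      add_zero] at this
    exact_mod_cast this

@[simp]
lemma bumpHomeomorph_apply (hρ : 0 < ρ) (hv : ‖v‖ ≤ ρ / 2) :
    bumpHomeomorph x hρ hv z = bump x ρ v z := rfl

@[simp]
lemma bump_bumpHomeomorph_symm (hρ : 0 < ρ) (hv : ‖v‖ ≤ ρ / 2) (w : E) :
    bump x ρ v ((bumpHomeomorph x hρ hv).symm w) = w :=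
  (bumpHomeomorph x hρ hv).apply_symm_apply w

lemma continuous_bumpHomeomorph_symm {T : Type*} [TopologicalSpace T] (hρ : 0 < ρ) {v : T → E}
    (hv : Continuous v) (hvρ : ∀ t, ‖v t‖ ≤ ρ / 2) :
    Continuous fun p : T × E => (bumpHomeomorph x hρ (hvρ p.1)).symm p.2 := by
  refine continuous_iff_continuousAt.2 fun p => tendsto_iff_dist_tendsto_zero.2 ?_
  refine squeeze_zero (fun _ => dist_nonneg) (fun q => ?_)
    (g := fun q : T × E => 2 * (dist q.2 p.2 + dist (v q.1) (v p.1))) ?_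
  · simpa using dist_le_two_mul_dist_bump (x := x) hρ (hvρ q.1) (v p.1)
      ((bumpHomeomorph x hρ (hvρ q.1)).symm q.2) ((bumpHomeomorph x hρ (hvρ p.1)).symm p.2)
  · have : Continuous fun q : T × E => 2 * (dist q.2 p.2 + dist (v q.1) (v p.1)) := by fun_prop
    simpa using this.tendsto p

end Bump

section Homogeneity

variable {E : Type*} [NormedAddCommGroup E] [NormedSpace ℝ E] [CompleteSpace E]

theorem exists_homeomorph_fixing_of_one_lt_rank (hE : 1 < Module.rank ℝ E) {S : Set E}
    (hS : S.Countable) (hS' : IsClosed S) {a b : E} (ha : a ∉ S) (hb : b ∉ S) :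
    ∃ ψ : E ≃ₜ E, (∀ z ∈ S, ψ z = z) ∧ ψ a = b := by
  refine (hS.isConnected_compl_of_one_lt_rank hE).isPreconnected.induction₂'
    (fun a b => ∃ ψ : E ≃ₜ E, (∀ z ∈ S, ψ z = z) ∧ ψ a = b) (fun c hc => ?_) ?_ ha hb
  · obtain ⟨ρ, hρ, hball⟩ := Metric.isOpen_iff.1 hS'.isOpen_compl c hc
    have hfar : ∀ z ∈ S, ρ ≤ dist z c := fun z hz => not_lt.1 fun h => hball h hz
    filter_upwards [nhdsWithin_le_nhds (ball_mem_nhds c (half_pos hρ))] with y hy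
    have hv : ‖y - c‖ ≤ ρ / 2 := by rw [← dist_eq_norm]; exact hy.le
    set φ := bumpHomeomorph c hρ hv
    have hφS : ∀ z ∈ S, φ z = z := fun z hz => bump_of_le_dist hρ (hfar z hz)
    have hφc : φ c = y := by simp [φ, bump_self]
    exact ⟨⟨φ, hφS, hφc⟩, φ.symm, fun z hz => φ.symm_apply_eq.2 (hφS z hz).symm,
      φ.symm_apply_eq.2 hφc.symm⟩
  · rintro - - - - - - ⟨ψ, hψS, rfl⟩ ⟨φ, hφS, rfl⟩
    exact ⟨ψ.trans φ, fun z hz => by simp [hψS z hz, hφS z hz], rfl⟩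

end Homogeneity

section PuncturedPlane

variable {m k : ℕ}

lemma forall_ne_natCast_succ_iff (f : ℂ ≃ ℂ) {c : ℂ} (hfix : ∀ i : Fin m, f (i : ℕ) = (i : ℕ))
    (hm : f m = c) (w : ℂ) :
    (∀ i : Fin (m + 1), w ≠ (i : ℕ)) ↔ (∀ i : Fin m, f w ≠ (i : ℕ)) ∧ f w ≠ c := by
  rw [Fin.forall_fin_succ']
  simp only [Fin.val_castSucc, Fin.val_last]
  refine and_congr (forall_congr' fun i => ?_) ?_
  · rw [← f.injective.ne_iff, hfix]
  · rw [← f.injective.ne_iff, hm]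

lemma continuous_config_apply (j : Fin k) : Continuous fun c : Config m k => (c.1 j : ℂ) :=
  continuous_subtype_val.comp ((continuous_apply j).comp continuous_subtype_val)

theorem exists_trivialization_of_homeomorph_family {U : Set (PuncturedPlane m)}
    (φ : U → ℂ ≃ₜ ℂ) (hφ : Continuous fun p : U × ℂ => φ p.1 p.2)
    (hφ' : Continuous fun p : U × ℂ => (φ p.1).symm p.2)
    (hfix : ∀ u (i : Fin m), φ u (i : ℕ) = (i : ℕ)) (hmove : ∀ u, φ u m = u) :
    ∃ e : U × Config (m + 1) k ≃ₜ {y : Config m (k + 1) // y.1 0 ∈ U},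
      ∀ p, (e p).1.1 0 = p.1 := by
  have hiff u := forall_ne_natCast_succ_iff (φ u).toEquiv (hfix u) (hmove u)
  simp only [Homeomorph.coe_toEquiv] at hiff
  let push (p : U × Config (m + 1) k) (j : Fin k) : PuncturedPlane m :=
    ⟨φ p.1 (p.2.1 j), ((hiff p.1 _).1 (p.2.1 j).2).1⟩
  have push_injective p : Injective (Fin.cons p.1.1 (push p)) := by
    refine Fin.cons_injective_iff.2 ⟨?_, fun j j' h => p.2.2 (Subtype.ext ?_)⟩
    · rintro ⟨j, hj⟩
      exact ((hiff p.1 _).1 (p.2.1 j).2).2 (congrArg Subtype.val hj)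
    · exact (φ p.1).injective (congrArg Subtype.val h)
  let pull (y : {y : Config m (k + 1) // y.1 0 ∈ U}) (j : Fin k) : PuncturedPlane (m + 1) :=
    ⟨(φ ⟨_, y.2⟩).symm (y.1.1 j.succ), (hiff ⟨_, y.2⟩ _).2 (by
      rw [Homeomorph.apply_symm_apply]
      exact ⟨(y.1.1 j.succ).2, fun h => Fin.succ_ne_zero j (y.1.2 (Subtype.ext h))⟩)⟩
  have pull_injective y : Injective (pull y) := fun j j' h =>
    Fin.succ_injective _ (y.1.2 (Subtype.ext ((φ _).symm.injective (congrArg Subtype.val h))))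
  refine ⟨
    { toFun p := ⟨⟨Fin.cons p.1.1 (push p), push_injective p⟩, p.1.2⟩
      invFun y := (⟨y.1.1 0, y.2⟩, ⟨pull y, pull_injective y⟩)
      left_inv p := ?_
      right_inv y := ?_
      continuous_toFun := ?_
      continuous_invFun := ?_ }, fun p => rfl⟩
  · refine Prod.ext rfl (Subtype.ext (funext fun j => Subtype.ext ?_))
    exact (φ p.1).symm_apply_apply _
  · refine Subtype.ext (Subtype.ext (funext (Fin.cases rfl fun j => Subtype.ext ?_)))
    exact (φ _).apply_symm_apply _
  · refine ((Continuous.finCons (by fun_prop) (continuous_pi fun j => ?_)).subtype_mk _).subtype_mk _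
    exact (hφ.comp (continuous_fst.prodMk
      ((continuous_config_apply j).comp continuous_snd))).subtype_mk _
  · have h0 : Continuous fun y : {y : Config m (k + 1) // y.1 0 ∈ U} => (⟨y.1.1 0, y.2⟩ : U) :=
      ((continuous_apply 0).comp (continuous_subtype_val.comp continuous_subtype_val)).subtype_mk _
    refine h0.prodMk ((continuous_pi fun j => ?_).subtype_mk _)
    exact (hφ'.comp (h0.prodMk
      ((continuous_config_apply j.succ).comp continuous_subtype_val))).subtype_mk _

theorem exists_homeomorph_family_fixing_punctures (x : PuncturedPlane m) :
    ∃ U : Set (PuncturedPlane m), IsOpen U ∧ x ∈ U ∧ ∃ φ : U → ℂ ≃ₜ ℂ,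
      (Continuous fun p : U × ℂ => φ p.1 p.2) ∧ (Continuous fun p : U × ℂ => (φ p.1).symm p.2) ∧
      (∀ u (i : Fin m), φ u (i : ℕ) = (i : ℕ)) ∧ ∀ u, φ u m = u := by
  set S : Set ℂ := range fun i : Fin m => ((i : ℕ) : ℂ)
  have hS : S.Finite := finite_range _
  have hxS : (x : ℂ) ∉ S := by rintro ⟨i, hi⟩; exact x.2 i hi.symm
  have hmS : (m : ℂ) ∉ S := by rintro ⟨i, hi⟩; exact i.2.ne (Nat.cast_injective hi)
  obtain ⟨ψ, hψS, hψm⟩ := exists_homeomorph_fixing_of_one_lt_rank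
    (by simp [Complex.rank_real_complex]) hS.countable hS.isClosed hmS hxS
  obtain ⟨ρ, hρ, hball⟩ := Metric.isOpen_iff.1 hS.isClosed.isOpen_compl x hxS
  have hfar (i : Fin m) : ρ ≤ dist ((i : ℕ) : ℂ) x := not_lt.1 fun h => hball h ⟨i, rfl⟩
  set U : Set (PuncturedPlane m) := Subtype.val ⁻¹' ball (x : ℂ) (ρ / 2)
  have hv (u : U) : ‖(u : ℂ) - x‖ ≤ ρ / 2 := by rw [← dist_eq_norm]; exact u.2.le
  refine ⟨U, isOpen_ball.preimage continuous_subtype_val, mem_ball_self (half_pos hρ),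
    fun u => ψ.trans (bumpHomeomorph x hρ (hv u)), ?_, ?_, fun u i => ?_, fun u => ?_⟩
  · show Continuous fun p : U × ℂ => bump (x : ℂ) ρ ((p.1 : ℂ) - x) (ψ p.2)
    exact continuous_bump.comp ((by fun_prop : Continuous fun p : U × ℂ => (p.1 : ℂ) - x).prodMk
      (ψ.continuous.comp continuous_snd))
  · exact ψ.symm.continuous.comp (continuous_bumpHomeomorph_symm hρ (by fun_prop) hv)
  · simp [hψS _ ⟨i, rfl⟩, bump_of_le_dist hρ (hfar i)]
  · simp [hψm, bump_self]

def sectionTail (x : PuncturedPlane m) (j : Fin k) : PuncturedPlane m :=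
  ⟨(‖(x : ℂ)‖ + m + 1 + j : ℝ), fun i h => by
    have hi : (i : ℝ) < m := by exact_mod_cast i.2
    have := congrArg Complex.re h
    simp only [Complex.ofReal_re, Complex.natCast_re] at this
    linarith [norm_nonneg (x : ℂ), (j : ℕ).cast_nonneg (α := ℝ)]⟩

lemma sectionTail_injective (x : PuncturedPlane m) : Injective (sectionTail (k := k) x) :=
  fun j j' h => Fin.ext (by simpa [sectionTail] using congrArg Subtype.val h)

lemma notMem_range_sectionTail (x : PuncturedPlane m) : x ∉ range (sectionTail (k := k) x) := by
  rintro ⟨j, hj⟩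
  have := congrArg (fun y : PuncturedPlane m => ‖(y : ℂ)‖) hj
  simp only [sectionTail, Complex.norm_real] at this
  rw [Real.norm_of_nonneg (by positivity)] at this
  linarith [(j : ℕ).cast_nonneg (α := ℝ)]

def configSection (m k : ℕ) : C(PuncturedPlane m, Config m (k + 1)) where
  toFun x := ⟨Fin.cons x (sectionTail x),
    Fin.cons_injective_iff.2 ⟨notMem_range_sectionTail x, sectionTail_injective x⟩⟩
  continuous_toFun := by
    refine (Continuous.finCons (A := fun _ => PuncturedPlane m) continuous_id
      (continuous_pi fun j => ?_)).subtype_mk _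
    exact (by fun_prop : Continuous fun x : PuncturedPlane m =>
      ((‖(x : ℂ)‖ + m + 1 + j : ℝ) : ℂ)).subtype_mk _

end PuncturedPlane

end

theorem statement9 (n m : ℕ) (hn : 2 ≤ n) :
    (∀ x : PuncturedPlane m, ∃ U : Set (PuncturedPlane m), IsOpen U ∧ x ∈ U ∧
      ∃ e : (U × Config (m + 1) (n - 1)) ≃ₜ
          {y : Config m n // y.1 ⟨0, by omega⟩ ∈ U},
        ∀ z : U × Config (m + 1) (n - 1),
          (e z).1.1 ⟨0, by omega⟩ = (z.1 : PuncturedPlane m)) ∧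
    ∃ s : C(PuncturedPlane m, Config m n), ∀ x, (s x).1 ⟨0, by omega⟩ = x := by
  obtain ⟨k, rfl⟩ : ∃ k, n = k + 1 := ⟨n - 1, by omega⟩
  refine ⟨fun x => ?_, configSection m k, fun x => rfl⟩
  obtain ⟨U, hU, hxU, φ, hφ, hφ', hfix, hmove⟩ := exists_homeomorph_family_fixing_punctures x
  exact ⟨U, hU, hxU, exists_trivialization_of_homeomorph_family φ hφ hφ' hfix hmove⟩
end

section
/- Let n ≥ 3 and k with 1 ≤ k ≤ n-1. If gcd(n, k) > 1, then there exist an integer p and an element α ∈ S_{n-k} × S_k ≤ S_n such that α is conjugate in S_n to σ^p, where σ = (1 2 ⋯ n) is the standard n-cycle, and σ^p ≠ 1. -/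
private lemma divmod_aux (r q b : ℕ) (hq : q < b) :
    (r * b + q) % b = q ∧ (r * b + q) / b = r := by
  constructor
  · rw [add_comm, Nat.add_mul_mod_self_right, Nat.mod_eq_of_lt hq]
  · rw [add_comm, Nat.add_mul_div_right _ _ (by omega : 0 < b), Nat.div_eq_of_lt hq]; omega

theorem statement16 (n k : ℕ) (hn : 3 ≤ n) (hk1 : 1 ≤ k) (hk : k ≤ n - 1)
    (h : 1 < Nat.gcd n k) :
    ∃ (p : ℤ) (g : Equiv.Perm (Fin n)),
      g * (finRotate n) ^ p * g⁻¹ ∈ YoungSubgroup n k ∧ (finRotate n) ^ p ≠ 1 := by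
  obtain ⟨m, rfl⟩ : ∃ m, n = m + 1 := ⟨n - 1, by omega⟩
  set n := m + 1 with hndef
  set d := Nat.gcd n k with hd
  have hdn : d ∣ n := Nat.gcd_dvd_left n k
  have hdk : d ∣ k := Nat.gcd_dvd_right n k
  set p := n / d with hp
  have hpd : p * d = n := Nat.div_mul_cancel hdn
  have hd1 : 1 < d := h
  have hn0 : 0 < n := by omega
  have hp0 : 0 < p := Nat.div_pos (Nat.le_of_dvd hn0 hdn) (by omega)
  have hpn : p < n := by nlinarith
  have hkn : k ≤ n := by omega
  have hdnk : d ∣ (n - k) := Nat.dvd_sub hdn hdk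
  have hnpd : n = p * d := hpd.symm
  have hndp : n = d * p := by rw [mul_comm]; exact hpd.symm
  have hdivp : ∀ i : Fin n, (i : ℕ) / p < d :=
    fun i => Nat.div_lt_of_lt_mul (lt_of_lt_of_eq i.isLt hnpd)
  have hdivd : ∀ j : Fin n, (j : ℕ) / d < p :=
    fun j => Nat.div_lt_of_lt_mul (lt_of_lt_of_eq j.isLt hndp)
  have hlt1 : ∀ i : Fin n, ((i : ℕ) % p) * d + (i : ℕ) / p < n := by
    intro i
    have h1 : (i : ℕ) % p < p := Nat.mod_lt _ hp0
    calc ((i : ℕ) % p) * d + (i : ℕ) / p < ((i : ℕ) % p) * d + d := by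
          have := hdivp i; omega
      _ = ((i : ℕ) % p + 1) * d := by ring
      _ ≤ p * d := Nat.mul_le_mul_right d (by omega)
      _ = n := hpd
  have hlt2 : ∀ j : Fin n, ((j : ℕ) % d) * p + (j : ℕ) / d < n := by
    intro j
    have h1 : (j : ℕ) % d < d := Nat.mod_lt _ (by omega)
    calc ((j : ℕ) % d) * p + (j : ℕ) / d < ((j : ℕ) % d) * p + p := by
          have := hdivd j; omega
      _ = ((j : ℕ) % d + 1) * p := by ring
      _ ≤ d * p := Nat.mul_le_mul_right p (by omega)
      _ = n := hndp.symm
  let g : Equiv.Perm (Fin n) :=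
    { toFun := fun i => ⟨((i : ℕ) % p) * d + (i : ℕ) / p, hlt1 i⟩
      invFun := fun j => ⟨((j : ℕ) % d) * p + (j : ℕ) / d, hlt2 j⟩
      left_inv := by
        intro i
        apply Fin.ext
        simp only
        obtain ⟨e1, e2⟩ := divmod_aux ((i : ℕ) % p) ((i : ℕ) / p) d (hdivp i)
        rw [e1, e2, Nat.div_add_mod']
      right_inv := by
        intro j
        apply Fin.ext
        simp only
        obtain ⟨e1, e2⟩ := divmod_aux ((j : ℕ) % d) ((j : ℕ) / d) p (hdivd j)
        rw [e1, e2, Nat.div_add_mod'] }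
  have hrot : ∀ (t : ℕ) (i : Fin n), (((finRotate n) ^ t) i : ℕ) = ((i : ℕ) + t) % n := by
    intro t
    induction t with
    | zero => intro i; simp [Nat.mod_eq_of_lt i.isLt]
    | succ t ih =>
      intro i
      rw [pow_succ, Equiv.Perm.mul_apply, ih, finRotate_succ_apply, Fin.val_add]
      have h1 : ((1 : Fin n) : ℕ) = 1 := by
        simp [Fin.val_one, Nat.mod_eq_of_lt (show 1 < n by omega)]
      rw [h1, Nat.mod_add_mod]
      ring_nf
  refine ⟨(p : ℤ), g, ?_, ?_⟩
  · -- membership in the Young subgroup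
    intro j
    rw [zpow_natCast]
    simp only [Equiv.Perm.mul_apply]
    have hjd : (j : ℕ) % d < d := Nat.mod_lt _ (by omega)
    have hjq : (j : ℕ) / d < p := hdivd j
    have hginv : ((g⁻¹ j : Fin n) : ℕ) = ((j : ℕ) % d) * p + (j : ℕ) / d := rfl
    have hx : ((((finRotate n) ^ p) (g⁻¹ j) : Fin n) : ℕ)
        = (((j : ℕ) % d + 1) * p + (j : ℕ) / d) % n := by
      rw [hrot, hginv]; ring_nf
    set x : Fin n := ((finRotate n) ^ p) (g⁻¹ j) with hxdef
    have hgx : ((g x : Fin n) : ℕ) = ((x : ℕ) % p) * d + (x : ℕ) / p := rfl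
    obtain ⟨t, ht⟩ := hdnk
    have key : (x : ℕ) % p = (j : ℕ) / d ∧ (x : ℕ) / p < d := by
      rcases eq_or_lt_of_le (show (j : ℕ) % d + 1 ≤ d by omega) with heq | hlt
      · have hxv : (x : ℕ) = (j : ℕ) / d := by
          rw [hx, heq, mul_comm d p, hpd, Nat.add_mod_left, Nat.mod_eq_of_lt (by omega)]
        rw [hxv]
        exact ⟨Nat.mod_eq_of_lt hjq, by rw [Nat.div_eq_of_lt hjq]; omega⟩
      · have hxval : (x : ℕ) = ((j : ℕ) % d + 1) * p + (j : ℕ) / d := by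
          rw [hx]
          apply Nat.mod_eq_of_lt
          calc ((j : ℕ) % d + 1) * p + (j : ℕ) / d < ((j : ℕ) % d + 1) * p + p := by omega
            _ = ((j : ℕ) % d + 2) * p := by ring
            _ ≤ d * p := Nat.mul_le_mul_right p (by omega)
            _ = n := hndp.symm
        obtain ⟨e1, e2⟩ := divmod_aux ((j : ℕ) % d + 1) ((j : ℕ) / d) p hjq
        rw [hxval, e1, e2]
        exact ⟨rfl, hlt⟩
    obtain ⟨hmod, hdiv⟩ := key
    rw [hgx, hmod]
    have hblock : ∀ s : ℕ, s < d → ((j : ℕ) / d * d + s < n - k ↔ (j : ℕ) / d < t) := by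
      intro s hs
      rw [ht]
      constructor
      · intro hlt'
        by_contra hc
        push_neg at hc
        have : d * t ≤ (j : ℕ) / d * d := by
          calc d * t ≤ d * ((j : ℕ) / d) := Nat.mul_le_mul_left d hc
            _ = (j : ℕ) / d * d := mul_comm _ _
        omega
      · intro hlt'
        have h2 : ((j : ℕ) / d + 1) * d ≤ t * d := Nat.mul_le_mul_right d (by omega)
        calc (j : ℕ) / d * d + s < ((j : ℕ) / d + 1) * d := by ring_nf; omega
          _ ≤ t * d := h2
          _ = d * t := mul_comm _ _
    have hjval : (j : ℕ) = (j : ℕ) / d * d + (j : ℕ) % d := (Nat.div_add_mod' _ _).symm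
    rw [hblock _ hdiv]
    conv_rhs => rw [hjval]
    exact (hblock _ hjd).symm
  · -- σ^p ≠ 1
    rw [zpow_natCast]
    intro hone
    have h0 : (((finRotate n) ^ p) (0 : Fin n) : ℕ) = p := by
      rw [hrot]
      simpa using Nat.mod_eq_of_lt hpn
    rw [hone] at h0
    simp at h0
    omega
end

section
/- Let n ≥ 3 and 2 ≤ k ≤ n-1, and suppose gcd(n,k) = gcd(n-1,k) = gcd(n-1,k-1) = 1. Then for every integer p with σ^p ≠ 1 (σ the standard n-cycle) no conjugate of σ^p lies in the Young subgroup S_{n-k} × S_k, and for every integer q with τ^q ≠ 1 (τ an (n-1)-cycle fixing n) no conjugate of τ^q lies in S_{n-k} × S_k. -/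
open Equiv Equiv.Perm Finset

/-- If a power of a cycle fixes a point of its support, it is the identity (integer powers). -/
lemma cycle_zpow_fix {α : Type*} [Finite α] {c : Equiv.Perm α} (hc : c.IsCycle)
    {x : α} (hx : c x ≠ x) {t : ℤ} (h : (c ^ t) x = x) : c ^ t = 1 := by
  have hpos : 0 < (orderOf c : ℤ) := by
    exact_mod_cast (orderOf_pos c)
  have hmod : c ^ t = c ^ ((t % (orderOf c : ℤ)).toNat) := by
    rw [← zpow_natCast, Int.toNat_of_nonneg (Int.emod_nonneg t (by omega)), zpow_mod_orderOf]
  rw [hmod] at h ⊢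
  exact (hc.pow_eq_one_iff' hx).2 h

/-- Counting lemma: a finset invariant under a permutation `h` of exponent `m`, on which all
orbits have exact size `m`, has cardinality divisible by `m`. -/
lemma dvd_card_aux {α : Type*} [DecidableEq α] [Fintype α] (h : Equiv.Perm α) (m : ℕ)
    (hm : 0 < m) (hm1 : h ^ m = 1) :
    ∀ S : Finset α, (∀ x ∈ S, h x ∈ S) →
      (∀ x ∈ S, ∀ j : ℕ, (h ^ j) x = x → m ∣ j) → m ∣ S.card := by
  intro S
  induction S using Finset.strongInductionOn with
  | _ S ih =>
    intro hinv hfix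
    rcases S.eq_empty_or_nonempty with rfl | ⟨x, hx⟩
    · simp
    · set O : Finset α := (Finset.range m).image (fun j => (h ^ j) x) with hO
      have horbS : ∀ j : ℕ, (h ^ j) x ∈ S := by
        intro j
        induction j with
        | zero => simpa using hx
        | succ j ihj => rw [pow_succ']; exact hinv _ ihj
      have hOS : O ⊆ S := by
        intro y hy
        simp only [hO, Finset.mem_image, Finset.mem_range] at hy
        obtain ⟨j, _, rfl⟩ := hy
        exact horbS j
      have hcardO : O.card = m := by
        rw [hO, Finset.card_image_of_injOn, Finset.card_range]
        intro i hi j hj hij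
        simp only [Finset.mem_coe, Finset.mem_range] at hi hj
        dsimp only at hij
        rcases le_total i j with hle | hle
        · have heq : (h ^ (j - i)) x = x := by
            apply (h ^ i).injective
            have : (h ^ i) ((h ^ (j - i)) x) = (h ^ j) x := by
              rw [← Equiv.Perm.mul_apply, ← pow_add, show i + (j - i) = j by omega]
            rw [this]
            exact hij.symm
          have := Nat.eq_zero_of_dvd_of_lt (hfix x hx (j - i) heq) (by omega)
          omega
        · have heq : (h ^ (i - j)) x = x := by
            apply (h ^ j).injective
            have : (h ^ j) ((h ^ (i - j)) x) = (h ^ i) x := by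
              rw [← Equiv.Perm.mul_apply, ← pow_add, show j + (i - j) = i by omega]
            rw [this]
            exact hij
          have := Nat.eq_zero_of_dvd_of_lt (hfix x hx (i - j) heq) (by omega)
          omega
      have hxO : x ∈ O := by
        simp only [hO, Finset.mem_image, Finset.mem_range]
        exact ⟨0, hm, by simp⟩
      have hss : S \ O ⊂ S := Finset.sdiff_ssubset hOS ⟨x, hxO⟩
      have hinv' : ∀ y ∈ S \ O, h y ∈ S \ O := by
        intro y hy
        rw [Finset.mem_sdiff] at hy ⊢
        refine ⟨hinv y hy.1, ?_⟩
        intro hmem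
        apply hy.2
        simp only [hO, Finset.mem_image, Finset.mem_range] at hmem ⊢
        obtain ⟨j, hj, hj2⟩ := hmem
        refine ⟨(m - 1 + j) % m, Nat.mod_lt _ hm, ?_⟩
        have hy' : y = (h ^ (m - 1 + j)) x := by
          apply h.injective
          rw [← hj2, ← Equiv.Perm.mul_apply]
          have : h * h ^ (m - 1 + j) = h ^ (m + j) := by
            rw [← pow_succ']
            congr 1
            omega
          rw [this, pow_add, hm1, one_mul]
        rw [← pow_eq_pow_mod _ hm1]
        exact hy'.symm
      have hfix' : ∀ y ∈ S \ O, ∀ j : ℕ, (h ^ j) y = y → m ∣ j := by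
        intro y hy
        exact hfix y (Finset.mem_sdiff.1 hy).1
      have := ih _ hss hinv' hfix'
      have hcard : S.card = (S \ O).card + m := by
        rw [Finset.card_sdiff_of_subset hOS, hcardO]
        have := Finset.card_le_card hOS
        omega
      rw [hcard]
      exact Nat.dvd_add this dvd_rfl

/-- Main divisibility lemma: if a conjugate of `c ^ q` (an integer power of a cycle `c`) lies in
the Young subgroup, then `orderOf (c ^ q)` divides the number of "high" letters whose `g⁻¹`-image
is in the support of `c`. -/
lemma key_dvd {n k : ℕ} (c : Equiv.Perm (Fin n)) (hc : c.IsCycle) (q : ℤ)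
    (g : Equiv.Perm (Fin n)) (hY : g * c ^ q * g⁻¹ ∈ YoungSubgroup n k) :
    orderOf (c ^ q) ∣
      ((Finset.univ.filter (fun i : Fin n => ¬ (i : ℕ) < n - k ∧ g⁻¹ i ∈ c.support)).card) := by
  set w := c ^ q with hw
  set m := orderOf w with hmdef
  set h := g * w * g⁻¹ with hh
  have hconjpow : ∀ j : ℕ, h ^ j = g * w ^ j * g⁻¹ := fun j => conj_pow
  have hm1 : h ^ m = 1 := by
    rw [hconjpow, pow_orderOf_eq_one]
    group
  apply dvd_card_aux h m (orderOf_pos w) hm1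
  · intro x hx
    simp only [Finset.mem_filter, Finset.mem_univ, true_and] at hx ⊢
    have hYh : ∀ i : Fin n, ((h i : ℕ) < n - k ↔ (i : ℕ) < n - k) := hY
    constructor
    · rw [hYh x]
      exact hx.1
    · have : g⁻¹ (h x) = w (g⁻¹ x) := by
        simp [hh, Equiv.Perm.mul_apply]
      rw [this, hw]
      exact Equiv.Perm.zpow_apply_mem_support.2 hx.2
  · intro x hx j hj
    simp only [Finset.mem_filter, Finset.mem_univ, true_and] at hx
    have hsupp : c (g⁻¹ x) ≠ g⁻¹ x := Equiv.Perm.mem_support.1 hx.2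
    have : (w ^ j) (g⁻¹ x) = g⁻¹ x := by
      have := congrArg (fun y => g⁻¹ y) hj
      simpa [hconjpow j, Equiv.Perm.mul_apply] using this
    have hz : (c ^ (q * (j : ℤ))) (g⁻¹ x) = g⁻¹ x := by
      rw [zpow_mul, zpow_natCast]
      exact this
    have : c ^ (q * (j : ℤ)) = 1 := cycle_zpow_fix hc hsupp hz
    have hwj : w ^ j = 1 := by
      rw [hw, ← zpow_natCast, ← zpow_mul]
      exact this
    exact orderOf_dvd_of_pow_eq_one hwj

lemma card_highs (n k : ℕ) (hk : k ≤ n) :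
    (Finset.univ.filter (fun i : Fin n => ¬ (i : ℕ) < n - k)).card = k := by
  have h1 : (Finset.univ.filter (fun i : Fin n => (i : ℕ) < n - k)).card = n - k := by
    have : (Finset.univ.filter (fun i : Fin n => (i : ℕ) < n - k))
        = (Finset.range (n - k)).attachFin (fun m hm => by
            rw [Finset.mem_range] at hm; omega) := by
      ext a
      simp [Finset.mem_attachFin, Finset.mem_range]
    rw [this, Finset.card_attachFin, Finset.card_range]
  have h2 := Finset.card_filter_add_card_filter_not
    (s := (Finset.univ : Finset (Fin n))) (p := fun i : Fin n => (i : ℕ) < n - k)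
  simp only [Finset.card_univ, Fintype.card_fin] at h2
  omega

theorem statement19 (n k : ℕ) (hn : 3 ≤ n) (hk2 : 2 ≤ k) (hk : k ≤ n - 1)
    (h1 : Nat.gcd n k = 1) (h2 : Nat.gcd (n - 1) k = 1)
    (h3 : Nat.gcd (n - 1) (k - 1) = 1) :
    (∀ p : ℤ, (finRotate n) ^ p ≠ 1 →
      ∀ g : Equiv.Perm (Fin n), g * (finRotate n) ^ p * g⁻¹ ∉ YoungSubgroup n k) ∧
    (∀ τ : Equiv.Perm (Fin n), τ.IsCycle → τ.support.card = n - 1 →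
      τ ⟨n - 1, by omega⟩ = ⟨n - 1, by omega⟩ →
      ∀ q : ℤ, τ ^ q ≠ 1 →
        ∀ g : Equiv.Perm (Fin n), g * τ ^ q * g⁻¹ ∉ YoungSubgroup n k) := by
  have hkn : k ≤ n := by omega
  constructor
  · -- σ part
    intro p hp g hY
    set c := finRotate n with hc
    have hcyc : c.IsCycle := isCycle_finRotate_of_le (by omega)
    have hsupp : c.support = Finset.univ := support_finRotate_of_le (by omega)
    set m := orderOf (c ^ p) with hm
    have hdvd := key_dvd c hcyc p g hY
    have hS : (Finset.univ.filter (fun i : Fin n => ¬ (i : ℕ) < n - k ∧ g⁻¹ i ∈ c.support))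
        = Finset.univ.filter (fun i : Fin n => ¬ (i : ℕ) < n - k) := by
      ext i
      simp [hsupp]
    rw [hS, card_highs n k hkn] at hdvd
    -- m divides n
    have hordc : orderOf c = n := by
      rw [hcyc.orderOf, hsupp, Finset.card_univ, Fintype.card_fin]
    have hmn : m ∣ n := by
      apply orderOf_dvd_of_pow_eq_one
      have : (c ^ p) ^ (n : ℕ) = c ^ (p * (n : ℤ)) := by
        rw [zpow_mul, zpow_natCast]
      have hcn : c ^ (n : ℕ) = 1 := by
        have h := pow_orderOf_eq_one c
        rwa [hordc] at h
      rw [this, mul_comm, zpow_mul, zpow_natCast, hcn, one_zpow]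
    have hm1 : m ≠ 1 := fun h => hp (orderOf_eq_one_iff.1 h)
    have hm0 : 0 < m := orderOf_pos _
    have := Nat.le_of_dvd one_pos (h1 ▸ Nat.dvd_gcd hmn hdvd)
    omega
  · -- τ part
    intro τ hcyc hcard hfixlast q hq g hY
    set last : Fin n := ⟨n - 1, by omega⟩ with hlast
    set m := orderOf (τ ^ q) with hm
    have hdvd := key_dvd τ hcyc q g hY
    have hlns : last ∉ τ.support := by
      simp [Equiv.Perm.mem_support, hfixlast]
    have hsupp : τ.support = Finset.univ.erase last := by
      apply Finset.eq_of_subset_of_card_le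
      · intro a ha
        rw [Finset.mem_erase]
        exact ⟨fun h => hlns (h ▸ ha), Finset.mem_univ a⟩
      · rw [Finset.card_erase_of_mem (Finset.mem_univ _), Finset.card_univ,
          Fintype.card_fin, hcard]
    have hS : (Finset.univ.filter (fun i : Fin n => ¬ (i : ℕ) < n - k ∧ g⁻¹ i ∈ τ.support))
        = (Finset.univ.filter (fun i : Fin n => ¬ (i : ℕ) < n - k)).erase (g last) := by
      ext i
      simp only [Finset.mem_filter, Finset.mem_univ, true_and, Finset.mem_erase, hsupp]
      constructor
      · rintro ⟨hi, hne, -⟩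
        refine ⟨fun h => hne ?_, hi⟩
        rw [h]
        simp
      · rintro ⟨hne, hi⟩
        refine ⟨hi, fun h => hne ?_, trivial⟩
        rw [← h]
        simp
    rw [hS] at hdvd
    -- m divides n - 1
    have hordc : orderOf τ = n - 1 := by rw [hcyc.orderOf, hcard]
    have hmn : m ∣ n - 1 := by
      apply orderOf_dvd_of_pow_eq_one
      have : (τ ^ q) ^ ((n - 1) : ℕ) = τ ^ (q * ((n - 1 : ℕ) : ℤ)) := by
        rw [zpow_mul, zpow_natCast]
      have hcn : τ ^ ((n - 1) : ℕ) = 1 := by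
        have h := pow_orderOf_eq_one τ
        rwa [hordc] at h
      rw [this, mul_comm, zpow_mul, zpow_natCast, hcn, one_zpow]
    have hm1 : m ≠ 1 := fun h => hq (orderOf_eq_one_iff.1 h)
    have hm0 : 0 < m := orderOf_pos _
    by_cases hgB : g last ∈ Finset.univ.filter (fun i : Fin n => ¬ (i : ℕ) < n - k)
    · rw [Finset.card_erase_of_mem hgB, card_highs n k hkn] at hdvd
      have := Nat.le_of_dvd one_pos (h3 ▸ Nat.dvd_gcd hmn hdvd)
      omega
    · rw [Finset.erase_eq_of_notMem hgB, card_highs n k hkn] at hdvd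
      have := Nat.le_of_dvd one_pos (h2 ▸ Nat.dvd_gcd hmn hdvd)
      omega
end
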